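/- arXiv:1908.09151 — 2 statements merged into one kernel-verified Lean document; each statement's English description precedes it below -/
import Mathlib

section
/- Let G be a connected graph with a split (A,B,A',B'). Define G_A as the graph on vertex set A∪A'∪{m_A} (m_A a new vertex) whose edges are the edges of G inside A∪A' together with edges from m_A to every vertex of A. Define G_B analogously with new vertex m_B adjacent to all of B. Then both G_A and G_B are connected. -/
/-- A split of a graph `G`: a partition `(A, B, A', B')` of the vertex set such that
every vertex of `A` is adjacent to every vertex of `B`, there are no edges between
`A'` and `B ∪ B'`, no edges between `B'` and `A ∪ A'`, and both sides have size ≥ 2. -/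
structure IsSplit {V : Type*} (G : SimpleGraph V) (A B A' B' : Set V) : Prop where
  cover : A ∪ B ∪ A' ∪ B' = Set.univ
  dAB : Disjoint A B
  dAA' : Disjoint A A'
  dAB' : Disjoint A B'
  dBA' : Disjoint B A'
  dBB' : Disjoint B B'
  dA'B' : Disjoint A' B'
  complete : ∀ a ∈ A, ∀ b ∈ B, G.Adj a b
  noA' : ∀ x ∈ A', ∀ y ∈ B ∪ B', ¬ G.Adj x y
  noB' : ∀ x ∈ B', ∀ y ∈ A ∪ A', ¬ G.Adj x y
  sideA : 2 ≤ (A ∪ A').ncard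
  sideB : 2 ≤ (B ∪ B').ncard

/-- The graph obtained from one side of a split: the induced subgraph on `S`
plus a new marker vertex (`none`) adjacent exactly to the vertices of `M ⊆ S`. -/
def sideGraph {V : Type*} (G : SimpleGraph V) (S M : Set V) : SimpleGraph (Option ↥S) where
  Adj x y :=
    match x, y with
    | some u, some v => G.Adj u v
    | some u, none => (u : V) ∈ M
    | none, some v => (v : V) ∈ M
    | none, none => False
  symm := by
    refine ⟨?_⟩
    rintro (_ | u) (_ | v) h
    · exact h
    · exact h
    · exact h
    · exact h.symm
  loopless := by
    refine ⟨?_⟩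
    rintro (_ | u) h
    · exact h
    · exact G.irrefl h

/-! Every vertex of `S` reaches the marker: follow a walk of `G` to a vertex outside `S`;
where it first leaves `S` it does so from a vertex of `M`, which is adjacent to the marker. -/

section sideGraph

variable {V : Type*} {G : SimpleGraph V} {S M : Set V}

theorem sideGraph_reachable_none_of_walk (hM : ∀ u ∈ S, ∀ v ∉ S, G.Adj u v → u ∈ M)
    {u b : V} (w : G.Walk u b) (hb : b ∉ S) (hu : u ∈ S) :
    (sideGraph G S M).Reachable (some ⟨u, hu⟩) none := by
  induction w with
  | nil => exact absurd hu hb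
  | @cons u v _ hadj _ ih =>
    by_cases hv : v ∈ S
    · have hadj' : (sideGraph G S M).Adj (some ⟨u, hu⟩) (some ⟨v, hv⟩) := hadj
      exact hadj'.reachable.trans (ih hb hv)
    · have hadj' : (sideGraph G S M).Adj (some ⟨u, hu⟩) none := hM u hu v hv hadj
      exact hadj'.reachable

theorem sideGraph_connected (hconn : G.Connected) (hS : ∃ b, b ∉ S)
    (hM : ∀ u ∈ S, ∀ v ∉ S, G.Adj u v → u ∈ M) : (sideGraph G S M).Connected := by
  obtain ⟨b, hb⟩ := hS
  have hreach : ∀ x, (sideGraph G S M).Reachable x none := by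
    rintro (_ | ⟨u, hu⟩)
    · rfl
    · obtain ⟨w⟩ := hconn u b
      exact sideGraph_reachable_none_of_walk hM w hb hu
  exact ⟨fun x y => (hreach x).trans (hreach y).symm⟩

end sideGraph

namespace IsSplit

variable {V : Type*} {G : SimpleGraph V} {A B A' B' : Set V}

theorem symm (h : IsSplit G A B A' B') : IsSplit G B A B' A' where
  cover := by rw [← h.cover]; ext x; simp only [Set.mem_union]; tauto
  dAB := h.dAB.symm
  dAA' := h.dBB'
  dAB' := h.dBA'
  dBA' := h.dAB'
  dBB' := h.dAA'
  dA'B' := h.dA'B'.symm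
  complete := fun b hb a ha => (h.complete a ha b hb).symm
  noA' := h.noB'
  noB' := h.noA'
  sideA := h.sideB
  sideB := h.sideA

theorem exists_notMem_left (h : IsSplit G A B A' B') : ∃ b, b ∉ A ∪ A' := by
  obtain ⟨b, hb⟩ := Set.nonempty_of_ncard_ne_zero (s := B ∪ B') (by linarith [h.sideB])
  refine ⟨b, ?_⟩
  rintro (hbA | hbA') <;> rcases hb with hbB | hbB'
  · exact h.dAB.ne_of_mem hbA hbB rfl
  · exact h.dAB'.ne_of_mem hbA hbB' rfl
  · exact h.dBA'.ne_of_mem hbB hbA' rfl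
  · exact h.dA'B'.ne_of_mem hbA' hbB' rfl

theorem mem_left_of_adj (h : IsSplit G A B A' B') {u v : V} (hu : u ∈ A ∪ A')
    (hv : v ∉ A ∪ A') (huv : G.Adj u v) : u ∈ A := by
  refine hu.resolve_right fun huA' => h.noA' u huA' v ?_ huv
  have hv' : v ∈ A ∪ B ∪ A' ∪ B' := h.cover ▸ Set.mem_univ v
  simp only [Set.mem_union] at hv hv' ⊢
  tauto

theorem sideGraph_left_connected (h : IsSplit G A B A' B') (hconn : G.Connected) :
    (sideGraph G (A ∪ A') A).Connected :=
  sideGraph_connected hconn h.exists_notMem_left fun _ hu _ hv => h.mem_left_of_adj hu hv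

end IsSplit

theorem stmt_1 {V : Type*} (G : SimpleGraph V) (A B A' B' : Set V)
    (h : IsSplit G A B A' B') (hconn : G.Connected) :
    (sideGraph G (A ∪ A') A).Connected ∧ (sideGraph G (B ∪ B') B).Connected :=
  ⟨h.sideGraph_left_connected hconn, h.symm.sideGraph_left_connected hconn⟩
end

section
/- Let G and H be graphs with splits (A,B,A',B') and (C,D,C',D') respectively, producing graphs G_A, G_B (markers m_A, m_B) and H_C, H_D (markers m_C, m_D). If there are isomorphisms φ : G_A → H_C with φ(m_A) = m_C and ψ : G_B → H_D with ψ(m_B) = m_D, then G and H are isomorphic. -/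
/-! A graph with a split is determined by its two sides: inside a side, adjacency is that of the
side graph, and across the split `v ∈ A ∪ A'`, `w ∈ B ∪ B'` are adjacent iff `v ∈ A` and `w ∈ B`,
i.e. iff both are neighbours of their markers. A marker-preserving isomorphism of side graphs is
therefore an isomorphism of induced subgraphs matching the markers' neighbourhoods, and two such
isomorphisms glue to an isomorphism of the whole graphs. -/

theorem Equiv.optionCongr_removeNone {α β : Type*} {e : Option α ≃ Option β}
    (h : e none = none) : e.removeNone.optionCongr = e := by
  ext1 (_ | x)
  · simp [h]
  · refine Equiv.removeNone_some e (Option.ne_none_iff_exists'.mp fun hx => ?_)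
    exact Option.some_ne_none x (e.injective (hx.trans h.symm))

theorem sideGraph_exists_induce_iso {V W : Type*} {G : SimpleGraph V} {H : SimpleGraph W}
    {S M : Set V} {T N : Set W} (φ : sideGraph G S M ≃g sideGraph H T N) (hφ : φ none = none) :
    ∃ e : G.induce S ≃g H.induce T, ∀ x, (e x : W) ∈ N ↔ (x : V) ∈ M := by
  set e := φ.toEquiv.removeNone
  have hsome (x : S) : φ (some x) = some (e x) :=
    (DFunLike.congr_fun (Equiv.optionCongr_removeNone (e := φ.toEquiv) hφ) (some x)).symm
  refine ⟨⟨e, fun {x y} => ?_⟩, fun x => ?_⟩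
  · have h := φ.map_rel_iff (a := some x) (b := some y)
    rwa [hsome, hsome] at h
  · have h := φ.map_rel_iff (a := some x) (b := none)
    rwa [hsome, hφ] at h

namespace IsSplit

variable {V : Type*} {G : SimpleGraph V} {A B A' B' : Set V}

theorem isCompl_sides (hG : IsSplit G A B A' B') : IsCompl (A ∪ A') (B ∪ B') where
  disjoint := by
    simp only [Set.disjoint_union_left, Set.disjoint_union_right]
    exact ⟨⟨hG.dAB, hG.dBA'.symm⟩, hG.dAB', hG.dA'B'⟩
  codisjoint := codisjoint_iff.mpr <| by
    change A ∪ A' ∪ (B ∪ B') = Set.univ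
    rw [Set.union_union_union_comm, ← Set.union_assoc, hG.cover]

theorem adj_iff_of_mem (hG : IsSplit G A B A' B') {v w : V} (hv : v ∈ A ∪ A')
    (hw : w ∈ B ∪ B') : G.Adj v w ↔ v ∈ A ∧ w ∈ B := by
  refine ⟨fun h => ?_, fun h => hG.complete v h.1 w h.2⟩
  rcases hv with hv | hv
  · rcases hw with hw | hw
    · exact ⟨hv, hw⟩
    · exact (hG.noB' w hw v (Or.inl hv) h.symm).elim
  · exact (hG.noA' v hv w hw h).elim

theorem nonempty_iso {W : Type*} {H : SimpleGraph W} {C D C' D' : Set W}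
    (hG : IsSplit G A B A' B') (hH : IsSplit H C D C' D')
    (e₁ : G.induce (A ∪ A') ≃g H.induce (C ∪ C')) (he₁ : ∀ x, (e₁ x : W) ∈ C ↔ (x : V) ∈ A)
    (e₂ : G.induce (B ∪ B') ≃g H.induce (D ∪ D')) (he₂ : ∀ x, (e₂ x : W) ∈ D ↔ (x : V) ∈ B) :
    Nonempty (G ≃g H) := by
  classical
  have hGc := hG.isCompl_sides.compl_eq
  let e₂' : ↥(A ∪ A')ᶜ ≃ ↥(C ∪ C')ᶜ :=
    (Equiv.setCongr hGc).trans (e₂.toEquiv.trans (Equiv.setCongr hH.isCompl_sides.compl_eq).symm)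
  let f : V ≃ W := (Equiv.Set.sumCompl _).symm.trans
    ((Equiv.sumCongr e₁.toEquiv e₂').trans (Equiv.Set.sumCompl _))
  have hf₁ (v : V) (hv : v ∈ A ∪ A') : f v = e₁ ⟨v, hv⟩ := by
    simp [f, Equiv.Set.sumCompl_symm_apply_of_mem hv]
  have hf₂ (v : V) (hv : v ∈ B ∪ B') : f v = e₂ ⟨v, hv⟩ := by
    have hv' : v ∉ A ∪ A' := by rw [← Set.mem_compl_iff, hGc]; exact hv
    simp [f, e₂', Equiv.Set.sumCompl_symm_apply_of_notMem hv']
  have hside (v : V) : v ∈ A ∪ A' ∨ v ∈ B ∪ B' := by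
    rw [← hGc]; exact em _
  have cross (v w : V) (hv : v ∈ A ∪ A') (hw : w ∈ B ∪ B') : H.Adj (f v) (f w) ↔ G.Adj v w := by
    rw [hf₁ v hv, hf₂ w hw, hH.adj_iff_of_mem (e₁ _).2 (e₂ _).2, he₁, he₂,
      hG.adj_iff_of_mem hv hw]
  refine ⟨⟨f, fun {v w} => ?_⟩⟩
  rcases hside v with hv | hv <;> rcases hside w with hw | hw
  · rw [hf₁ v hv, hf₁ w hw]; exact e₁.map_rel_iff
  · exact cross v w hv hw
  · rw [H.adj_comm, G.adj_comm]; exact cross w v hw hv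
  · rw [hf₂ v hv, hf₂ w hw]; exact e₂.map_rel_iff

end IsSplit

theorem stmt_10 {V W : Type*} (G : SimpleGraph V) (H : SimpleGraph W)
    (A B A' B' : Set V) (C D C' D' : Set W)
    (hG : IsSplit G A B A' B') (hH : IsSplit H C D C' D')
    (phi : sideGraph G (A ∪ A') A ≃g sideGraph H (C ∪ C') C)
    (psi : sideGraph G (B ∪ B') B ≃g sideGraph H (D ∪ D') D)
    (hphi : phi none = none) (hpsi : psi none = none) :
    Nonempty (G ≃g H) := by
  obtain ⟨e₁, he₁⟩ := sideGraph_exists_induce_iso phi hphi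
  obtain ⟨e₂, he₂⟩ := sideGraph_exists_induce_iso psi hpsi
  exact hG.nonempty_iso hH e₁ he₁ e₂ he₂
end
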